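/- Let D ⊆ D' be convex bodies, c ∈ D, 0 < α < 1/6, and S ⊆ D' a convex body with c ∈ S such that for every unit direction u: (1−α)·max_{p∈D}⟨p−c,u⟩ ≤ max_{p∈S}⟨p−c,u⟩ + α·width(D). Then width(S) ≥ (1−3α)·width(D). -/

import Mathlib

/-- The directional width of a set `X` along `u`: `max_{a,b ∈ X} ⟪a - b, u⟫`. -/
noncomputable def dirWidth {d : ℕ} (X : Set (EuclideanSpace ℝ (Fin d)))
    (u : EuclideanSpace ℝ (Fin d)) : ℝ :=
  sSup {s : ℝ | ∃ a ∈ X, ∃ b ∈ X, s = (inner ℝ (a - b) u : ℝ)}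

/-- The width of a set: the minimum of the directional widths over all unit directions. -/
noncomputable def setWidth {d : ℕ} (X : Set (EuclideanSpace ℝ (Fin d))) : ℝ :=
  sInf {r : ℝ | ∃ u : EuclideanSpace ℝ (Fin d), ‖u‖ = 1 ∧ r = dirWidth X u}

/-!
Seen from any point `c`, the width of a bounded set along `u` splits as `h(u) + h(-u)`, where
`h(v) = sup_{p ∈ X} ⟪p - c, v⟫`. Adding the hypothesis for `u` and `-u` therefore gives
`(1 - α) w_D(u) ≤ w_S(u) + 2α width(D)`, and `width(D) ≤ w_D(u)` turns this into
`(1 - 3α) width(D) ≤ w_S(u)` for every unit `u`.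
-/

open Bornology Pointwise

section SupportFunction

variable {E : Type*} [NormedAddCommGroup E] [InnerProductSpace ℝ E]

/-- The support function `h_{X - c}` of `X` seen from the point `c`. -/
noncomputable def supportFunction (X : Set E) (c u : E) : ℝ :=
  sSup {s : ℝ | ∃ p ∈ X, s = inner ℝ (p - c) u}

lemma bddAbove_inner_sub {X : Set E} (hX : IsBounded X) (c u : E) :
    BddAbove {s : ℝ | ∃ p ∈ X, s = inner ℝ (p - c) u} := by
  obtain ⟨R, hR⟩ := hX.exists_norm_le
  refine ⟨(R + ‖c‖) * ‖u‖, ?_⟩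
  rintro _ ⟨p, hp, rfl⟩
  calc inner ℝ (p - c) u ≤ ‖p - c‖ * ‖u‖ := real_inner_le_norm _ _
    _ ≤ (R + ‖c‖) * ‖u‖ := by
      gcongr
      linarith [norm_sub_le p c, hR p hp]

end SupportFunction

section Width

variable {d : ℕ}

lemma dirWidth_eq_add {X : Set (EuclideanSpace ℝ (Fin d))} (hX : IsBounded X)
    (hne : X.Nonempty) (c u : EuclideanSpace ℝ (Fin d)) :
    dirWidth X u = supportFunction X c u + supportFunction X c (-u) := by
  have hsplit : ∀ a b : EuclideanSpace ℝ (Fin d),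
      inner ℝ (a - c) u + inner ℝ (b - c) (-u) = inner ℝ (a - b) u := by
    intro a b
    simp only [inner_sub_left, inner_neg_right]
    ring
  have hsum : {s : ℝ | ∃ a ∈ X, ∃ b ∈ X, s = inner ℝ (a - b) u} =
      {s : ℝ | ∃ p ∈ X, s = inner ℝ (p - c) u} + {s : ℝ | ∃ p ∈ X, s = inner ℝ (p - c) (-u)} := by
    ext s
    simp only [Set.mem_add, Set.mem_ofPred_eq]
    constructor
    · rintro ⟨a, ha, b, hb, rfl⟩
      exact ⟨_, ⟨a, ha, rfl⟩, _, ⟨b, hb, rfl⟩, hsplit a b⟩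
    · rintro ⟨_, ⟨a, ha, rfl⟩, _, ⟨b, hb, rfl⟩, rfl⟩
      exact ⟨a, ha, b, hb, hsplit a b⟩
  obtain ⟨p, hp⟩ := hne
  rw [dirWidth, hsum]
  exact csSup_add ⟨_, p, hp, rfl⟩ (bddAbove_inner_sub hX c u) ⟨_, p, hp, rfl⟩
    (bddAbove_inner_sub hX c (-u))

-- No boundedness is needed: `0` is also the junk value of `sSup` on unbounded sets.
lemma dirWidth_nonneg (X : Set (EuclideanSpace ℝ (Fin d))) (u : EuclideanSpace ℝ (Fin d)) :
    0 ≤ dirWidth X u := by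
  rcases X.eq_empty_or_nonempty with rfl | ⟨a, ha⟩
  · simp [dirWidth]
  by_cases hbdd : BddAbove {s : ℝ | ∃ a ∈ X, ∃ b ∈ X, s = inner ℝ (a - b) u}
  · exact Real.sSup_nonneg' ⟨0, ⟨a, ha, a, ha, by simp⟩, le_rfl⟩
  · rw [dirWidth, Real.sSup_of_not_bddAbove hbdd]

lemma setWidth_le_dirWidth (X : Set (EuclideanSpace ℝ (Fin d))) {u : EuclideanSpace ℝ (Fin d)}
    (hu : ‖u‖ = 1) : setWidth X ≤ dirWidth X u :=
  csInf_le ⟨0, by rintro _ ⟨v, -, rfl⟩; exact dirWidth_nonneg X v⟩ ⟨u, hu, rfl⟩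

lemma mul_setWidth_le_setWidth {X Y : Set (EuclideanSpace ℝ (Fin d))} {k : ℝ}
    (h : ∀ u : EuclideanSpace ℝ (Fin d), ‖u‖ = 1 → k * setWidth Y ≤ dirWidth X u) :
    k * setWidth Y ≤ setWidth X := by
  by_cases hunit : ∃ u : EuclideanSpace ℝ (Fin d), ‖u‖ = 1
  · obtain ⟨u, hu⟩ := hunit
    exact le_csInf ⟨_, u, hu, rfl⟩ (by rintro _ ⟨v, hv, rfl⟩; exact h v hv)
  · -- in dimension `0` there are no unit vectors, and both widths are `sInf ∅ = 0`
    have hempty : ∀ Z : Set (EuclideanSpace ℝ (Fin d)),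
        {r : ℝ | ∃ u : EuclideanSpace ℝ (Fin d), ‖u‖ = 1 ∧ r = dirWidth Z u} = ∅ :=
      fun Z => Set.eq_empty_of_forall_notMem fun _ ⟨u, hu, _⟩ => hunit ⟨u, hu⟩
    simp only [setWidth, hempty, Real.sInf_empty, mul_zero, le_refl]

lemma mul_setWidth_le_dirWidth {D S : Set (EuclideanSpace ℝ (Fin d))}
    {c u : EuclideanSpace ℝ (Fin d)} {α : ℝ} (hα : α ≤ 1)
    (hD : IsBounded D) (hS : IsBounded S) (hDne : D.Nonempty) (hSne : S.Nonempty) (hu : ‖u‖ = 1)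
    (hplus : (1 - α) * supportFunction D c u ≤ supportFunction S c u + α * setWidth D)
    (hminus : (1 - α) * supportFunction D c (-u) ≤ supportFunction S c (-u) + α * setWidth D) :
    (1 - 3 * α) * setWidth D ≤ dirWidth S u := by
  calc (1 - 3 * α) * setWidth D = (1 - α) * setWidth D - 2 * α * setWidth D := by ring
    _ ≤ (1 - α) * dirWidth D u - 2 * α * setWidth D := by
      have hWu := setWidth_le_dirWidth D hu
      gcongr
    _ = (1 - α) * supportFunction D c u + (1 - α) * supportFunction D c (-u)
        - 2 * α * setWidth D := by
      rw [dirWidth_eq_add hD hDne c u]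
      ring
    _ ≤ supportFunction S c u + supportFunction S c (-u) := by linarith
    _ = dirWidth S u := (dirWidth_eq_add hS hSne c u).symm

end Width

theorem stmt_13_general (d : ℕ) (α : ℝ) (hα : α < 1/6)
    (D S : Set (EuclideanSpace ℝ (Fin d)))
    (hDcomp : IsCompact D)
    (hScomp : IsCompact S)
    (c : EuclideanSpace ℝ (Fin d)) (hcD : c ∈ D) (hcS : c ∈ S)
    (hdir : ∀ u : EuclideanSpace ℝ (Fin d), ‖u‖ = 1 →
      (1 - α) * sSup {s : ℝ | ∃ p ∈ D, s = (inner ℝ (p - c) u : ℝ)} ≤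
        sSup {s : ℝ | ∃ p ∈ S, s = (inner ℝ (p - c) u : ℝ)} + α * setWidth D) :
    (1 - 3 * α) * setWidth D ≤ setWidth S :=
  mul_setWidth_le_setWidth fun u hu =>
    mul_setWidth_le_dirWidth (by linarith) hDcomp.isBounded hScomp.isBounded ⟨c, hcD⟩ ⟨c, hcS⟩ hu
      (hdir u hu) (hdir (-u) (by rwa [norm_neg]))

theorem stmt_13 (d : ℕ) (α : ℝ) (hα0 : 0 < α) (hα : α < 1/6)
    (D D' S : Set (EuclideanSpace ℝ (Fin d)))
    (hDD' : D ⊆ D') (hSD' : S ⊆ D')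
    (hDconv : Convex ℝ D) (hDcomp : IsCompact D) (hDint : (interior D).Nonempty)
    (hD'conv : Convex ℝ D') (hD'comp : IsCompact D') (hD'int : (interior D').Nonempty)
    (hSconv : Convex ℝ S) (hScomp : IsCompact S) (hSint : (interior S).Nonempty)
    (c : EuclideanSpace ℝ (Fin d)) (hcD : c ∈ D) (hcS : c ∈ S)
    (hdir : ∀ u : EuclideanSpace ℝ (Fin d), ‖u‖ = 1 →
      (1 - α) * sSup {s : ℝ | ∃ p ∈ D, s = (inner ℝ (p - c) u : ℝ)} ≤
        sSup {s : ℝ | ∃ p ∈ S, s = (inner ℝ (p - c) u : ℝ)} + α * setWidth D) :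
    (1 - 3 * α) * setWidth D ≤ setWidth S :=
  stmt_13_general d α hα D S hDcomp hScomp c hcD hcS hdir
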